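/- Consider the single-item all-pay auction with parameters (B_1, B_2, v_1, v_2) with B_1 ≠ B_2; let s be the player with the larger budget, w the other player, and L = min{B_1, B_2, v_1, v_2}. If v_s = L, then the following profile of mixed strategies is a Nash equilibrium: player s's strategy is the probability measure on [0, L] with an atom of mass (v_w − L)/v_w at 0 and cumulative distribution function F_s(x) = (v_w − L + x)/v_w for x ∈ (0, L]; player w's strategy is the probability measure on [0, L] with cumulative distribution function F_w(x) = x/v_s for x ∈ [0, L] (the uniform distribution on [0, L]). -/

import Mathlib

open MeasureTheory Set

noncomputable section

/-- `L = min {B₁, B₂, v₁, v₂}` for the single-item auction. -/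
def Lval (B v : Fin 2 → ℝ) : ℝ := min (min (B 0) (B 1)) (min (v 0) (v 1))

/-- Probability that player `i` wins the single item when bidding `xi` while the
opponent bids `xo`: the strictly higher bid wins; on a tie at
`min {B₁, B₂, v₁, v₂}` the player with the strictly larger `min {Bᵢ, vᵢ}` wins,
and all other ties are resolved by a fair coin. -/
def winProb (B v : Fin 2 → ℝ) (i : Fin 2) (xi xo : ℝ) : ℝ :=
  if xo < xi then 1
  else if xi < xo then 0
  else if xi = Lval B v ∧ min (B (1 - i)) (v (1 - i)) < min (B i) (v i) then 1
  else if xi = Lval B v ∧ min (B i) (v i) < min (B (1 - i)) (v (1 - i)) then 0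
  else 1 / 2

/-- Expected utility of player `i` from the pure bids `xi` (own) and `xo` (opponent):
he pays his bid in any case and receives `v i` with his winning probability. -/
def payoff (B v : Fin 2 → ℝ) (i : Fin 2) (xi xo : ℝ) : ℝ :=
  winProb B v i xi xo * v i - xi

/-- A mixed strategy of a player with budget `Bi`: a probability measure on `[0, Bi]`. -/
def IsStrategy (Bi : ℝ) (μ : Measure ℝ) : Prop :=
  IsProbabilityMeasure μ ∧ μ (Icc 0 Bi) = 1

/-- Expected utility of player `i` when he plays `μ` and the opponent plays `ν`. -/
def expUtil (B v : Fin 2 → ℝ) (i : Fin 2) (μ ν : Measure ℝ) : ℝ :=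
  ∫ xi, (∫ xo, payoff B v i xi xo ∂ν) ∂μ

/-- `(F 0, F 1)` is a (mixed) Nash equilibrium of the single-item all-pay auction. -/
def IsNash (B v : Fin 2 → ℝ) (F : Fin 2 → Measure ℝ) : Prop :=
  (∀ i, IsStrategy (B i) (F i)) ∧
  ∀ i, ∀ μ, IsStrategy (B i) μ →
    expUtil B v i μ (F (1 - i)) ≤ expUtil B v i (F i) (F (1 - i))

/-- The (topological) support of a mixed strategy. -/
def supp (μ : Measure ℝ) : Set ℝ := {x | ∀ U ∈ nhds x, μ U ≠ 0}

/-!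
Each equilibrium strategy makes the opponent indifferent on its own support. Against the
uniform distribution on `[0, L]`, a bid `x ≥ 0` of player `s` earns `v_s · min x L / L - x`,
which is `0` on `[0, L]` and negative beyond since `v_s = L`. Against `F_s`, a bid `x > 0` of
player `w` earns `v_w F_s(x) - x = v_w - L + min x L - x`, constant on `(0, L]`; the bid `0`,
which ties with the atom of `F_s`, earns at most `v_w F_s(0) = v_w - L` because the winning
probability is at most `1`.
-/

theorem Lval_le_budget (B v : Fin 2 → ℝ) (j : Fin 2) : Lval B v ≤ B j := by
  fin_cases j <;> simp [Lval]

theorem Lval_le_value (B v : Fin 2 → ℝ) (j : Fin 2) : Lval B v ≤ v j := by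
  fin_cases j <;> simp [Lval]

section Payoff

variable {B v : Fin 2 → ℝ} {i : Fin 2} {x xo : ℝ}

theorem winProb_of_lt (h : xo < x) : winProb B v i x xo = 1 := if_pos h

theorem winProb_of_gt (h : x < xo) : winProb B v i x xo = 0 := by
  rw [winProb, if_neg h.not_gt, if_pos h]

theorem winProb_mem_Icc : winProb B v i x xo ∈ Icc 0 1 := by
  unfold winProb; split_ifs <;> norm_num

theorem measurable_winProb (x : ℝ) : Measurable (winProb B v i x) :=
  Measurable.ite measurableSet_Iio measurable_const
    (Measurable.ite measurableSet_Ioi measurable_const measurable_const)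

theorem payoff_le_indicator_Iic (hv : 0 ≤ v i) (x xo : ℝ) :
    payoff B v i x xo ≤ (Iic x).indicator (fun _ => v i) xo - x := by
  rw [payoff, sub_le_sub_iff_right]
  rcases le_or_gt xo x with h | h
  · rw [indicator_of_mem (mem_Iic.2 h)]
    exact mul_le_of_le_one_left hv winProb_mem_Icc.2
  · rw [indicator_of_notMem (notMem_Iic.2 h), winProb_of_gt h, zero_mul]

theorem payoff_of_ne (h : xo ≠ x) :
    payoff B v i x xo = (Iio x).indicator (fun _ => v i) xo - x := by
  rw [payoff]
  rcases h.lt_or_gt with h | h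
  · rw [winProb_of_lt h, indicator_of_mem (mem_Iio.2 h), one_mul]
  · rw [winProb_of_gt h, indicator_of_notMem (notMem_Iio.2 h.le), zero_mul]

variable {ν : Measure ℝ} [IsProbabilityMeasure ν]

theorem integral_indicator_const_sub {S : Set ℝ} (hS : MeasurableSet S) {c : ℝ} :
    ∫ xo, S.indicator (fun _ => c) xo - x ∂ν = ν.real S * c - x := by
  rw [integral_sub ((integrable_const c).indicator hS) (integrable_const x),
    integral_indicator_const c hS, integral_const, probReal_univ, smul_eq_mul, one_smul]

theorem integral_payoff_le (hv : 0 ≤ v i) (x : ℝ) :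
    ∫ xo, payoff B v i x xo ∂ν ≤ ν.real (Iic x) * v i - x := by
  have hint : Integrable (payoff B v i x) ν :=
    ((Integrable.of_mem_Icc 0 1 (measurable_winProb x).aemeasurable
      (ae_of_all _ fun _ => winProb_mem_Icc)).mul_const _).sub (integrable_const x)
  calc ∫ xo, payoff B v i x xo ∂ν ≤ ∫ xo, (Iic x).indicator (fun _ => v i) xo - x ∂ν :=
        integral_mono hint ((integrable_const _).indicator measurableSet_Iic |>.sub
          (integrable_const _)) (payoff_le_indicator_Iic hv x)
    _ = ν.real (Iic x) * v i - x := integral_indicator_const_sub measurableSet_Iic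

theorem integral_payoff_of_measure_singleton (h : ν {x} = 0) :
    ∫ xo, payoff B v i x xo ∂ν = ν.real (Iio x) * v i - x := by
  have hne : ∀ᵐ xo ∂ν, xo ≠ x := compl_mem_ae_iff.2 h
  rw [integral_congr_ae (hne.mono fun xo hxo => payoff_of_ne hxo),
    integral_indicator_const_sub measurableSet_Iio]

end Payoff

def IsBestResponse (B v : Fin 2 → ℝ) (i : Fin 2) (μ ν : Measure ℝ) : Prop :=
  ∀ μ', IsStrategy (B i) μ' → expUtil B v i μ' ν ≤ expUtil B v i μ ν

section BestResponse

variable {B v : Fin 2 → ℝ} {i : Fin 2} {μ ν : Measure ℝ}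

theorem IsStrategy.ae_mem_Icc {b : ℝ} (hμ : IsStrategy b μ) : ∀ᵐ x ∂μ, x ∈ Icc 0 b :=
  have := hμ.1
  mem_ae_iff.2 ((prob_compl_eq_zero_iff measurableSet_Icc).2 hμ.2)

theorem isStrategy_of_ae_mem_Icc [IsProbabilityMeasure μ] {b L : ℝ} (hLb : L ≤ b)
    (h : ∀ᵐ x ∂μ, x ∈ Icc 0 L) : IsStrategy b μ :=
  ⟨‹_›, (prob_compl_eq_zero_iff measurableSet_Icc).1 <|
    mem_ae_iff.1 (h.mono fun _ hx => Icc_subset_Icc_right hLb hx)⟩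

/-- `0 ≤ M` covers a non-integrable payoff, whose integral is the junk value `0`. -/
theorem isBestResponse_of_forall_le {M : ℝ} [IsProbabilityMeasure μ] (hM : 0 ≤ M)
    (hle : ∀ x ∈ Icc 0 (B i), ∫ xo, payoff B v i x xo ∂ν ≤ M)
    (heq : ∀ᵐ x ∂μ, ∫ xo, payoff B v i x xo ∂ν = M) : IsBestResponse B v i μ ν := by
  intro μ' hμ'
  have := hμ'.1
  have hval : expUtil B v i μ ν = M := by
    rw [expUtil, integral_congr_ae heq, integral_const, probReal_univ, one_smul]
  rw [hval, expUtil]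
  by_cases hint : Integrable (fun x => ∫ xo, payoff B v i x xo ∂ν) μ'
  · calc ∫ x, ∫ xo, payoff B v i x xo ∂ν ∂μ' ≤ ∫ _, M ∂μ' :=
          integral_mono_ae hint (integrable_const M) (hμ'.ae_mem_Icc.mono hle)
      _ = M := by rw [integral_const, probReal_univ, one_smul]
  · rwa [integral_undef hint]

theorem isNash_ite {s : Fin 2} (hμ : IsStrategy (B s) μ) (hν : IsStrategy (B (1 - s)) ν)
    (hμν : IsBestResponse B v s μ ν) (hνμ : IsBestResponse B v (1 - s) ν μ) :
    IsNash B v fun k => if k = s then μ else ν := by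
  have hsw : 1 - s ≠ s := by fin_cases s <;> decide
  have hss : 1 - (1 - s) = s := by fin_cases s <;> decide
  refine ⟨fun k => ?_, fun k => ?_⟩ <;> obtain rfl | rfl : k = s ∨ k = 1 - s := by
    fin_cases k <;> fin_cases s <;> simp
  · simpa using hμ
  · simpa [hsw] using hν
  · simpa [hsw, IsBestResponse] using hμν
  · simpa [hsw, hss, IsBestResponse] using hνμ

end BestResponse

section Distributions

variable {L x : ℝ}

theorem volume_restrict_Icc_real_Iic (hL : 0 ≤ L) (hx : 0 ≤ x) :
    (volume.restrict (Icc 0 L)).real (Iic x) = min x L := by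
  have hIcc : Iic x ∩ Icc 0 L = Icc 0 (min x L) := by
    ext y
    simp only [mem_inter_iff, mem_Iic, mem_Icc, le_min_iff]
    tauto
  rw [measureReal_restrict_apply measurableSet_Iic, hIcc, Real.volume_real_Icc, sub_zero,
    max_eq_left (le_min hx hL)]

theorem volume_restrict_Icc_real_Iio (hL : 0 ≤ L) (hx : 0 ≤ x) :
    (volume.restrict (Icc 0 L)).real (Iio x) = min x L := by
  rw [measureReal_congr Iio_ae_eq_Iic, volume_restrict_Icc_real_Iic hL hx]

/-- `uniformBid L` is the paper's `F_w`, and `zeroAtomBid v_w L` is `F_s`. -/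
def uniformBid (L : ℝ) : Measure ℝ := ENNReal.ofReal (1 / L) • volume.restrict (Icc 0 L)

def zeroAtomBid (v L : ℝ) : Measure ℝ :=
  ENNReal.ofReal ((v - L) / v) • Measure.dirac 0 +
    ENNReal.ofReal (1 / v) • volume.restrict (Ioc 0 L)

theorem isProbabilityMeasure_uniformBid (hL : 0 < L) : IsProbabilityMeasure (uniformBid L) := by
  constructor
  rw [uniformBid, Measure.smul_apply, Measure.restrict_apply_univ, Real.volume_Icc, sub_zero,
    smul_eq_mul, ← ENNReal.ofReal_mul (by positivity), one_div_mul_cancel hL.ne',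
    ENNReal.ofReal_one]

theorem uniformBid_singleton (x : ℝ) : uniformBid L {x} = 0 := by
  simp [uniformBid]

theorem uniformBid_real_Iio (hL : 0 ≤ L) (hx : 0 ≤ x) :
    (uniformBid L).real (Iio x) = min x L / L := by
  rw [uniformBid, measureReal_ennreal_smul_apply, volume_restrict_Icc_real_Iio hL hx,
    ENNReal.toReal_ofReal (by positivity), one_div_mul_eq_div]

theorem ae_mem_Ioc_uniformBid : ∀ᵐ x ∂uniformBid L, x ∈ Ioc 0 L := by
  refine Measure.ae_smul_measure ?_ _
  rw [← Measure.restrict_congr_set Ioc_ae_eq_Icc]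
  exact ae_restrict_mem measurableSet_Ioc

variable {v : ℝ}

theorem zeroAtomBid_eq : zeroAtomBid v L =
    ENNReal.ofReal ((v - L) / v) • Measure.dirac 0 +
      ENNReal.ofReal (1 / v) • volume.restrict (Icc 0 L) := by
  rw [zeroAtomBid, Measure.restrict_congr_set Ioc_ae_eq_Icc]

theorem isProbabilityMeasure_zeroAtomBid (hL : 0 ≤ L) (hLv : L ≤ v) (hv : 0 < v) :
    IsProbabilityMeasure (zeroAtomBid v L) := by
  constructor
  rw [zeroAtomBid_eq, Measure.add_apply, Measure.smul_apply, Measure.smul_apply,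
    Measure.restrict_apply_univ, Real.volume_Icc, sub_zero, measure_univ, smul_eq_mul, smul_eq_mul,
    mul_one, ← ENNReal.ofReal_mul (by positivity),
    ← ENNReal.ofReal_add (div_nonneg (sub_nonneg.2 hLv) hv.le) (by positivity)]
  field_simp
  simp [hv.ne']

theorem zeroAtomBid_singleton (hx : x ≠ 0) : zeroAtomBid v L {x} = 0 := by
  simp [zeroAtomBid, hx]

theorem zeroAtomBid_real_of_zero_mem {S : Set ℝ} (hLv : L ≤ v) (hv : 0 < v) (hS : 0 ∈ S) :
    (zeroAtomBid v L).real S = (v - L + (volume.restrict (Icc 0 L)).real S) / v := by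
  rw [zeroAtomBid_eq, measureReal_add_apply (ENNReal.mul_ne_top ENNReal.ofReal_ne_top
    (measure_ne_top _ _)) (ENNReal.mul_ne_top ENNReal.ofReal_ne_top (measure_ne_top _ _)),
    measureReal_ennreal_smul_apply, measureReal_ennreal_smul_apply, measureReal_def,
    Measure.dirac_apply_of_mem hS, ENNReal.toReal_ofReal (div_nonneg (sub_nonneg.2 hLv) hv.le),
    ENNReal.toReal_ofReal (by positivity)]
  field_simp
  simp

theorem zeroAtomBid_real_Iic (hL : 0 ≤ L) (hLv : L ≤ v) (hv : 0 < v) (hx : 0 ≤ x) :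
    (zeroAtomBid v L).real (Iic x) = (v - L + min x L) / v := by
  rw [zeroAtomBid_real_of_zero_mem hLv hv (mem_Iic.2 hx), volume_restrict_Icc_real_Iic hL hx]

theorem zeroAtomBid_real_Iio (hL : 0 ≤ L) (hLv : L ≤ v) (hv : 0 < v) (hx : 0 < x) :
    (zeroAtomBid v L).real (Iio x) = (v - L + min x L) / v := by
  rw [zeroAtomBid_real_of_zero_mem hLv hv (mem_Iio.2 hx), volume_restrict_Icc_real_Iio hL hx.le]

theorem ae_mem_Icc_zeroAtomBid (hL : 0 ≤ L) : ∀ᵐ x ∂zeroAtomBid v L, x ∈ Icc 0 L := by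
  rw [zeroAtomBid_eq, ae_add_measure_iff]
  exact ⟨Measure.ae_smul_measure (by simp [hL]) _,
    Measure.ae_smul_measure (ae_restrict_mem measurableSet_Icc) _⟩

end Distributions

section Equilibrium

variable {B v : Fin 2 → ℝ} {i : Fin 2} {L : ℝ} {μ : Measure ℝ}

theorem integral_payoff_uniformBid (hL : 0 < L) {x : ℝ} (hx : 0 ≤ x) :
    ∫ xo, payoff B v i x xo ∂uniformBid L = min x L / L * v i - x :=
  have := isProbabilityMeasure_uniformBid hL
  (integral_payoff_of_measure_singleton (uniformBid_singleton x)).trans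
    (by rw [uniformBid_real_Iio hL.le hx])

theorem isBestResponse_uniformBid (hvi : v i = L) (hL : 0 < L) [IsProbabilityMeasure μ]
    (hμ : ∀ᵐ x ∂μ, x ∈ Icc 0 L) : IsBestResponse B v i μ (uniformBid L) := by
  refine isBestResponse_of_forall_le le_rfl (fun x hx => ?_) (hμ.mono fun x hx => ?_)
  · rw [integral_payoff_uniformBid hL hx.1, hvi, div_mul_cancel₀ _ hL.ne']
    exact sub_nonpos.2 (min_le_left x L)
  · rw [integral_payoff_uniformBid hL hx.1, hvi, div_mul_cancel₀ _ hL.ne', min_eq_left hx.2,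
      sub_self]

theorem isBestResponse_zeroAtomBid (hL : 0 < L) (hLv : L ≤ v i) [IsProbabilityMeasure μ]
    (hμ : ∀ᵐ x ∂μ, x ∈ Ioc 0 L) : IsBestResponse B v i μ (zeroAtomBid (v i) L) := by
  have hv : 0 < v i := hL.trans_le hLv
  have := isProbabilityMeasure_zeroAtomBid hL.le hLv hv
  refine isBestResponse_of_forall_le (sub_nonneg.2 hLv) (fun x hx => ?_) (hμ.mono fun x hx => ?_)
  · calc ∫ xo, payoff B v i x xo ∂zeroAtomBid (v i) L
        ≤ (zeroAtomBid (v i) L).real (Iic x) * v i - x := integral_payoff_le hv.le x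
      _ = v i - L + min x L - x := by
        rw [zeroAtomBid_real_Iic hL.le hLv hv hx.1, div_mul_cancel₀ _ hv.ne']
      _ ≤ v i - L := by linarith [min_le_left x L]
  · rw [integral_payoff_of_measure_singleton (zeroAtomBid_singleton hx.1.ne'),
      zeroAtomBid_real_Iio hL.le hLv hv hx.1, div_mul_cancel₀ _ hv.ne', min_eq_left hx.2]
    ring

end Equilibrium

theorem nash_single_item_case2 (B v : Fin 2 → ℝ)
    (hv : ∀ i, 0 < v i) (s : Fin 2)
    (hvs : v s = Lval B v) :
    IsNash B v (fun k =>
      if k = s then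
        ENNReal.ofReal ((v (1 - s) - Lval B v) / v (1 - s)) • Measure.dirac (0 : ℝ) +
          ENNReal.ofReal (1 / v (1 - s)) • volume.restrict (Ioc (0 : ℝ) (Lval B v))
      else
        ENNReal.ofReal (1 / v s) • volume.restrict (Icc (0 : ℝ) (Lval B v))) := by
  set L := Lval B v
  have hL : 0 < L := hvs ▸ hv s
  have hLw : L ≤ v (1 - s) := Lval_le_value B v (1 - s)
  have := isProbabilityMeasure_zeroAtomBid hL.le hLw (hv (1 - s))
  have := isProbabilityMeasure_uniformBid hL
  have hs_ae : ∀ᵐ x ∂zeroAtomBid (v (1 - s)) L, x ∈ Icc 0 L := ae_mem_Icc_zeroAtomBid hL.le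
  have hw_ae : ∀ᵐ x ∂uniformBid L, x ∈ Ioc 0 L := ae_mem_Ioc_uniformBid
  have hw_ae' : ∀ᵐ x ∂uniformBid L, x ∈ Icc 0 L :=
    hw_ae.mono fun _ hx => Ioc_subset_Icc_self hx
  rw [hvs]
  exact isNash_ite (μ := zeroAtomBid (v (1 - s)) L) (ν := uniformBid L)
    (isStrategy_of_ae_mem_Icc (Lval_le_budget B v s) hs_ae)
    (isStrategy_of_ae_mem_Icc (Lval_le_budget B v (1 - s)) hw_ae')
    (isBestResponse_uniformBid hvs hL hs_ae) (isBestResponse_zeroAtomBid hL hLw hw_ae)
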